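/- Let μ ∈ ℂ, n ∈ ℕ, and for f : ℂ → ℂ define the lower-triangular Toeplitz matrix T_n(f) ∈ Matrix (Fin n) (Fin n) ℂ by (T_n(f))_{i j} = (iteratedDeriv (i−j) f μ)/(i−j)! when i ≥ j and 0 when i < j. Let h₁ and h₂ be analytic at μ with h₂(μ) ≠ 0, let p ∈ ℂ[X] be a polynomial, and define g : ℂ → ℂ by g(λ) = h₁(λ) · p(λ) / h₂(λ). Then for every i < n, (iteratedDeriv i g μ)/i! equals the (i, 0) entry of the matrix T_n(h₁) · (T_n(h₂))⁻¹ · T_n(fun z => p(z)). -/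

import Mathlib

open Polynomial

/-!
`Toep μ n f` is the matrix of multiplication by the Taylor polynomial of `f` at `μ` in
`ℂ[X] ⧸ (Xⁿ)`, so by the Leibniz rule `Toep μ n` is multiplicative on functions that are
`n` times differentiable at `μ`, and its values commute. Since `g * h₂ = h₁ * p` near `μ`,
`Toep g * Toep h₂ = Toep h₁ * Toep p`; `Toep h₂` is lower triangular with diagonal `h₂ μ ≠ 0`,
hence invertible, so `Toep g = Toep h₁ * (Toep h₂)⁻¹ * Toep p`, and the first column of
`Toep g` is the vector of scaled derivatives of `g`.
-/

/-- The lower-triangular Toeplitz matrix of scaled derivatives of `f` at `μ`: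
`(T_n(f))_{ij} = f^{(i-j)}(μ)/(i-j)!` for `i ≥ j` and `0` otherwise. -/
noncomputable def Toep (μ : ℂ) (n : ℕ) (f : ℂ → ℂ) : Matrix (Fin n) (Fin n) ℂ :=
  fun i j =>
    if (j : ℕ) ≤ (i : ℕ) then
      iteratedDeriv ((i : ℕ) - (j : ℕ)) f μ / (((i : ℕ) - (j : ℕ)).factorial : ℂ)
    else 0

open Finset
open scoped Nat

def lowerToeplitz {R : Type*} [Zero R] (n : ℕ) (c : ℕ → R) : Matrix (Fin n) (Fin n) R :=
  fun i j => if (j : ℕ) ≤ i then c (i - j) else 0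

section lowerToeplitz

variable {R : Type*} {n : ℕ}

theorem lowerToeplitz_congr [Zero R] {a b : ℕ → R} (h : ∀ k < n, a k = b k) :
    lowerToeplitz n a = lowerToeplitz n b := by
  ext i j
  simp only [lowerToeplitz]
  split_ifs
  · exact h _ (by omega)
  · rfl

theorem lowerToeplitz_mul [NonUnitalNonAssocSemiring R] (a b : ℕ → R) :
    lowerToeplitz n a * lowerToeplitz n b =
      lowerToeplitz n (fun k => ∑ x ∈ antidiagonal k, a x.1 * b x.2) := by
  ext i j
  simp only [Matrix.mul_apply, lowerToeplitz, ite_mul, mul_ite, zero_mul, mul_zero, ← ite_and]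
  rw [Fin.sum_univ_eq_sum_range (fun l => if j ≤ l ∧ l ≤ i then a (i - l) * b (l - j) else 0),
    ← sum_filter]
  split_ifs with hji
  · have hIco : {l ∈ range n | (j : ℕ) ≤ l ∧ l ≤ (i : ℕ)} = Ico (j : ℕ) (i + 1) := by
      ext l; simp only [mem_filter, mem_range, mem_Ico]; omega
    rw [hIco, sum_Ico_eq_sum_range, ← Nat.sum_antidiagonal_swap]
    simp only [Prod.fst_swap, Prod.snd_swap]
    rw [Nat.sum_antidiagonal_eq_sum_range_succ (fun x y => a y * b x)]
    refine sum_congr (by congr 1; omega) fun m hm => ?_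
    rw [mem_range] at hm
    congr 2 <;> omega
  · refine sum_eq_zero fun l hl => ?_
    simp only [mem_filter] at hl
    omega

theorem lowerToeplitz_commute [CommSemiring R] (a b : ℕ → R) :
    Commute (lowerToeplitz n a) (lowerToeplitz n b) := by
  rw [Commute, SemiconjBy, lowerToeplitz_mul, lowerToeplitz_mul]
  congr! 2 with k
  rw [← Nat.sum_antidiagonal_swap]
  simp only [Prod.fst_swap, Prod.snd_swap, mul_comm]

theorem det_lowerToeplitz [CommRing R] (c : ℕ → R) : (lowerToeplitz n c).det = c 0 ^ n := by
  rw [Matrix.det_of_isLowerTriangular]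
  · simp [lowerToeplitz]
  · intro i j hij
    have : ¬ (j : ℕ) ≤ i := by simpa using hij
    simp [lowerToeplitz, this]

end lowerToeplitz

theorem iteratedDeriv_fun_mul_div_factorial {𝕜 : Type*} [NontriviallyNormedField 𝕜] [CharZero 𝕜]
    {f g : 𝕜 → 𝕜} {x : 𝕜} {k : ℕ} (hf : ContDiffAt 𝕜 k f x) (hg : ContDiffAt 𝕜 k g x) :
    iteratedDeriv k (fun z => f z * g z) x / k ! =
      ∑ p ∈ antidiagonal k, iteratedDeriv p.1 f x / p.1 ! * (iteratedDeriv p.2 g x / p.2 !) := by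
  rw [iteratedDeriv_fun_mul hf hg, sum_div, Nat.sum_antidiagonal_eq_sum_range_succ
    (fun i j => iteratedDeriv i f x / i ! * (iteratedDeriv j g x / j !))]
  refine sum_congr rfl fun m hm => ?_
  have hmk : m ≤ k := Nat.lt_succ_iff.mp (mem_range.mp hm)
  have hk : (k ! : 𝕜) ≠ 0 := Nat.cast_ne_zero.mpr k.factorial_ne_zero
  rw [Nat.cast_choose 𝕜 hmk]
  field_simp

open Filter Topology

section Toep

variable {μ : ℂ} {n : ℕ}

theorem Toep_eq_lowerToeplitz (μ : ℂ) (n : ℕ) (f : ℂ → ℂ) :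
    Toep μ n f = lowerToeplitz n (fun k => iteratedDeriv k f μ / k !) := rfl

theorem Toep_mul {f g : ℂ → ℂ} (hf : ContDiffAt ℂ n f μ) (hg : ContDiffAt ℂ n g μ) :
    Toep μ n f * Toep μ n g = Toep μ n (fun z => f z * g z) := by
  simp only [Toep_eq_lowerToeplitz, lowerToeplitz_mul]
  refine lowerToeplitz_congr fun k hk => ?_
  have hkn : (k : WithTop ℕ∞) ≤ n := by exact_mod_cast hk.le
  rw [iteratedDeriv_fun_mul_div_factorial (hf.of_le hkn) (hg.of_le hkn)]

theorem Toep_commute (f g : ℂ → ℂ) : Commute (Toep μ n f) (Toep μ n g) := by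
  simpa only [Toep_eq_lowerToeplitz] using lowerToeplitz_commute _ _

theorem Toep_congr {f g : ℂ → ℂ} (h : f =ᶠ[𝓝 μ] g) : Toep μ n f = Toep μ n g := by
  simp only [Toep_eq_lowerToeplitz, h.iteratedDeriv_eq]

theorem det_Toep (f : ℂ → ℂ) : (Toep μ n f).det = f μ ^ n := by
  simp [Toep_eq_lowerToeplitz, det_lowerToeplitz]

end Toep

/-- The scaled derivatives of `g = h₁ ⬝ p / h₂` at `μ` are the entries of the
first column of `T_n(h₁) ⬝ (T_n(h₂))⁻¹ ⬝ T_n(p)`. -/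
theorem stmt7 (μ : ℂ) (n : ℕ) (h₁ h₂ : ℂ → ℂ)
    (hh₁ : AnalyticAt ℂ h₁ μ) (hh₂ : AnalyticAt ℂ h₂ μ) (h0 : h₂ μ ≠ 0)
    (p : ℂ[X]) (g : ℂ → ℂ) (hg : ∀ l : ℂ, g l = h₁ l * p.eval l / h₂ l)
    (i : ℕ) (hi : i < n) :
    iteratedDeriv i g μ / (i.factorial : ℂ) =
      (Toep μ n h₁ * (Toep μ n h₂)⁻¹ * Toep μ n (fun z => p.eval z))
        ⟨i, hi⟩ ⟨0, by omega⟩ := by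
  have hp : ContDiffAt ℂ n (fun z => p.eval z) μ := by
    simpa using (p.contDiff_aeval (𝕜 := ℂ) n).contDiffAt (x := μ)
  have hg' : ContDiffAt ℂ n g μ := by
    rw [funext hg]
    exact (hh₁.contDiffAt.mul hp).div hh₂.contDiffAt h0
  have hev : (fun z => g z * h₂ z) =ᶠ[𝓝 μ] fun z => h₁ z * p.eval z := by
    filter_upwards [hh₂.continuousAt.eventually_ne h0] with z hz
    rw [hg z, div_mul_cancel₀ _ hz]
  have hdet : IsUnit (Toep μ n h₂).det := by
    rw [det_Toep]
    exact (IsUnit.mk0 _ h0).pow n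
  have hcomm : Commute (Toep μ n h₂)⁻¹ (Toep μ n (fun z => p.eval z)) := by
    simpa using Matrix.Commute.zpow_left (Toep_commute h₂ (fun z => p.eval z)) (-1)
  have hTg : Toep μ n h₁ * (Toep μ n h₂)⁻¹ * Toep μ n (fun z => p.eval z) = Toep μ n g := by
    rw [mul_assoc, hcomm.eq, ← mul_assoc, Toep_mul hh₁.contDiffAt hp, ← Toep_congr hev,
      ← Toep_mul hg' hh₂.contDiffAt, Matrix.mul_nonsing_inv_cancel_right _ _ hdet]
  simp [hTg, Toep]
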